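/- Let n ≥ 6 be divisible by 3, and let A = !![a₁,a₂,a₃; b₁,b₂,b₃; c₁,c₂,c₃] be a real 3×3 matrix with D := det A ≠ 0. Let (xᵢ,yᵢ,pᵢ,qᵢ) ∈ ℝ⁴ for i = 1,…,n with hᵢ := c₁xᵢ+c₂yᵢ+c₃ ≠ 0 and Δ₁₂₃ ≠ 0, Δ₁₂₄ ≠ 0, and let (x̃ᵢ,ỹᵢ,p̃ᵢ,q̃ᵢ) be the prolonged transform of the i-th data. Then zₙ := (∏_{i=5}^{n} Δ₁₂ᵢ)·(Δ₁₃₄Δ₂₃₄)^{n/3−1}/(Δ₁₂₃Δ₁₂₄)^{2n/3−3} is a relative invariant of weight −1/3 for the diagonal action on n points: z̃ₙ = ((∏_{i=1}^{n} hᵢ)/D^{n/3}) · zₙ, where z̃ₙ is computed from the transformed data. -/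

import Mathlib

/-!
Write `Pᵢ = (xᵢ, yᵢ, 1)`. The line `hᵢ ℓᵢ A⁻¹` passes through the transformed point `A Pᵢ / hᵢ`,
because its value there is `ℓᵢ · Pᵢ = 0`; a gradient line is determined by its first two
coordinates and one of its points, so `hᵢ ℓᵢ A⁻¹` is the gradient line of the transformed data.
Hence `Δ̃ᵢⱼₖ = hᵢ hⱼ hₖ Δᵢⱼₖ / D`, and the exponents in `zₙ` are balanced so that each of
`h₁, …, hₙ` survives exactly once while `D` occurs to the power `-n/3`.
-/

open Matrix

/-- The gradient line `ℓ = (p, q, -p*x - q*y)` of the data `(x, y, p, q)`. -/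
noncomputable def gradLine (x y p q : ℝ) : Fin 3 → ℝ := ![p, q, -(p * x) - q * y]

/-- `Δᵢⱼₖ`: the determinant of the 3×3 matrix whose rows are the gradient lines of the
points `i, j, k` of the configuration `(x, y, p, q)`. -/
noncomputable def Delta3 (x y p q : ℕ → ℝ) (i j k : ℕ) : ℝ :=
  Matrix.det (Matrix.of
    ![gradLine (x i) (y i) (p i) (q i),
      gradLine (x j) (y j) (p j) (q j),
      gradLine (x k) (y k) (p k) (q k)])

lemma gradLine_dotProduct (x y p q : ℝ) : gradLine x y p q ⬝ᵥ ![x, y, 1] = 0 := by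
  simp [gradLine, dotProduct, Fin.sum_univ_three]

lemma gradLine_eq_of_dotProduct_eq_zero {x y : ℝ} {v : Fin 3 → ℝ} (hv : v ⬝ᵥ ![x, y, 1] = 0) :
    gradLine x y (v 0) (v 1) = v := by
  have hv' : v 0 * x + v 1 * y + v 2 = 0 := by simpa [dotProduct, Fin.sum_univ_three] using hv
  ext j; fin_cases j
  · rfl
  · rfl
  · show -(v 0 * x) - v 1 * y = v 2
    linear_combination -hv'

lemma gradLine_transform {A : Matrix (Fin 3) (Fin 3) ℝ} (hA : IsUnit A.det)
    {x y p q h xt yt : ℝ} (hP : ![xt, yt, 1] = h⁻¹ • A *ᵥ ![x, y, 1]) :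
    gradLine xt yt ((h • gradLine x y p q ᵥ* A⁻¹) 0) ((h • gradLine x y p q ᵥ* A⁻¹) 1) =
      h • gradLine x y p q ᵥ* A⁻¹ := by
  refine gradLine_eq_of_dotProduct_eq_zero ?_
  rw [hP, smul_dotProduct, dotProduct_smul, dotProduct_mulVec, vecMul_vecMul, nonsing_inv_mul _ hA,
    vecMul_one, gradLine_dotProduct, smul_zero, smul_zero]

lemma det_of_smul_vecMul {n R : Type*} [Fintype n] [DecidableEq n] [CommRing R]
    (c : n → R) (v : n → n → R) (B : Matrix n n R) :
    det (of fun i => c i • v i ᵥ* B) = (∏ i, c i) * det (of v) * det B := by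
  rw [mul_assoc, ← det_mul, ← det_mul_column]
  rfl

lemma Delta3_transform {A : Matrix (Fin 3) (Fin 3) ℝ} {x y p q xt yt pt qt h : ℕ → ℝ}
    {S : Finset ℕ} (hline : ∀ m ∈ S, gradLine (xt m) (yt m) (pt m) (qt m) =
      h m • gradLine (x m) (y m) (p m) (q m) ᵥ* A⁻¹) {i j k : ℕ} (hi : i ∈ S) (hj : j ∈ S)
    (hk : k ∈ S) :
    Delta3 xt yt pt qt i j k = h i * h j * h k / A.det * Delta3 x y p q i j k := by
  set ℓ : ℕ → Fin 3 → ℝ := fun m => gradLine (x m) (y m) (p m) (q m)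
  have hrows : of ![h i • ℓ i ᵥ* A⁻¹, h j • ℓ j ᵥ* A⁻¹, h k • ℓ k ᵥ* A⁻¹] =
      of fun r => ![h i, h j, h k] r • ![ℓ i, ℓ j, ℓ k] r ᵥ* A⁻¹ := by
    ext r; fin_cases r <;> rfl
  simp only [Delta3, hline i hi, hline j hj, hline k hk]
  rw [hrows, det_of_smul_vecMul, Fin.prod_univ_three, det_nonsing_inv, Ring.inverse_eq_inv']
  simp only [cons_val_zero, cons_val_one, Matrix.cons_val, ℓ]
  ring

open Finset

noncomputable def zn (n : ℕ) (Δ : ℕ → ℕ → ℕ → ℝ) : ℝ :=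
  (∏ i ∈ Icc 5 n, Δ 1 2 i) * (Δ 1 3 4 * Δ 2 3 4) ^ (n / 3 - 1) /
    (Δ 1 2 3 * Δ 1 2 4) ^ (2 * n / 3 - 3)

lemma prod_Icc_one_eq_mul_prod_Icc_five {M : Type*} [CommMonoid M] (f : ℕ → M) {n : ℕ}
    (hn : 4 ≤ n) :
    ∏ i ∈ Icc 1 n, f i = f 1 * f 2 * f 3 * f 4 * ∏ i ∈ Icc 5 n, f i := by
  have hIoc (m : ℕ) : Icc (m + 1) n = Ioc m n := by ext; simp only [mem_Icc, mem_Ioc]; omega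
  rw [hIoc 0, hIoc 4, ← prod_Ioc_consecutive f (Nat.zero_le 4) hn,
    show Ioc 0 4 = {1, 2, 3, 4} by rfl]
  simp [mul_assoc]

lemma zn_eq_of_forall_eq_mul {n : ℕ} (hn : 6 ≤ n) (h3 : 3 ∣ n) {Δ Δ' : ℕ → ℕ → ℕ → ℝ}
    {h : ℕ → ℝ} {D : ℝ} (hD : D ≠ 0) (hh : ∀ i ∈ Icc 1 n, h i ≠ 0)
    (h123 : Δ 1 2 3 ≠ 0) (h124 : Δ 1 2 4 ≠ 0)
    (hΔ : ∀ i ∈ Icc 1 n, ∀ j ∈ Icc 1 n, ∀ k ∈ Icc 1 n, Δ' i j k = h i * h j * h k / D * Δ i j k) :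
    zn n Δ' = (∏ i ∈ Icc 1 n, h i) / D ^ (n / 3) * zn n Δ := by
  obtain ⟨k, rfl⟩ : ∃ k, n = 3 * k + 6 := ⟨n / 3 - 2, by omega⟩
  obtain ⟨m1, m2, m3, m4⟩ : 1 ∈ Icc 1 (3 * k + 6) ∧ 2 ∈ Icc 1 (3 * k + 6) ∧
      3 ∈ Icc 1 (3 * k + 6) ∧ 4 ∈ Icc 1 (3 * k + 6) := by simp only [mem_Icc]; omega
  have hprod : ∏ i ∈ Icc 5 (3 * k + 6), Δ' 1 2 i =
      (h 1 * h 2 / D) ^ (3 * k + 2) * ((∏ i ∈ Icc 5 (3 * k + 6), h i) *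
        ∏ i ∈ Icc 5 (3 * k + 6), Δ 1 2 i) := by
    have step : ∀ i ∈ Icc 5 (3 * k + 6), Δ' 1 2 i = h 1 * h 2 / D * (h i * Δ 1 2 i) := by
      intro i hi
      rw [hΔ 1 m1 2 m2 i (Icc_subset_Icc_left (by norm_num) hi)]
      ring
    rw [prod_congr rfl step, prod_mul_distrib, prod_const, prod_mul_distrib, Nat.card_Icc,
      show 3 * k + 6 + 1 - 5 = 3 * k + 2 by omega]
  have e1 : (3 * k + 6) / 3 - 1 = k + 1 := by omega
  have e2 : (3 * k + 6) / 3 = k + 2 := by omega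
  have e3 : 2 * (3 * k + 6) / 3 - 3 = 2 * k + 1 := by omega
  have := hh 1 m1; have := hh 2 m2; have := hh 3 m3; have := hh 4 m4
  rw [zn, zn, e1, e2, e3, hprod, prod_Icc_one_eq_mul_prod_Icc_five h (by omega),
    hΔ 1 m1 3 m3 4 m4, hΔ 2 m2 3 m3 4 m4, hΔ 1 m1 2 m2 3 m3, hΔ 1 m1 2 m2 4 m4]
  simp only [div_eq_mul_inv, mul_pow, inv_pow, mul_inv]
  field_simp
  ring

/-- For `n ≥ 6` divisible by 3, the quantity
`zₙ = (∏_{i=5}^{n} Δ₁₂ᵢ) (Δ₁₃₄Δ₂₃₄)^{n/3−1} / (Δ₁₂₃Δ₁₂₄)^{2n/3−3}` is a relative invariant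
of weight `−1/3`: `z̃ₙ = ((∏ᵢ hᵢ) / D^{n/3}) · zₙ`. -/
theorem zn_relative_invariant_divisible_case (n : ℕ) (hn : 6 ≤ n) (hg : 3 ∣ n)
    (a1 a2 a3 b1 b2 b3 c1 c2 c3 : ℝ)
    (hD : Matrix.det !![a1, a2, a3; b1, b2, b3; c1, c2, c3] ≠ 0)
    (x y p q : ℕ → ℝ)
    (hh : ∀ i ∈ Finset.Icc 1 n, c1 * x i + c2 * y i + c3 ≠ 0)
    (h123 : Delta3 x y p q 1 2 3 ≠ 0)
    (h124 : Delta3 x y p q 1 2 4 ≠ 0)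
    (xt yt pt qt : ℕ → ℝ)
    (hxt : ∀ i ∈ Finset.Icc 1 n,
      xt i = (a1 * x i + a2 * y i + a3) / (c1 * x i + c2 * y i + c3))
    (hyt : ∀ i ∈ Finset.Icc 1 n,
      yt i = (b1 * x i + b2 * y i + b3) / (c1 * x i + c2 * y i + c3))
    (hpt : ∀ i ∈ Finset.Icc 1 n, pt i = ((c1 * x i + c2 * y i + c3) •
      Matrix.vecMul (gradLine (x i) (y i) (p i) (q i))
        (!![a1, a2, a3; b1, b2, b3; c1, c2, c3])⁻¹) 0)
    (hqt : ∀ i ∈ Finset.Icc 1 n, qt i = ((c1 * x i + c2 * y i + c3) •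
      Matrix.vecMul (gradLine (x i) (y i) (p i) (q i))
        (!![a1, a2, a3; b1, b2, b3; c1, c2, c3])⁻¹) 1) :
    (∏ i ∈ Finset.Icc 5 n, Delta3 xt yt pt qt 1 2 i) *
        (Delta3 xt yt pt qt 1 3 4 * Delta3 xt yt pt qt 2 3 4) ^ (n / 3 - 1) /
        (Delta3 xt yt pt qt 1 2 3 * Delta3 xt yt pt qt 1 2 4) ^ (2 * n / 3 - 3)
      = ((∏ i ∈ Finset.Icc 1 n, (c1 * x i + c2 * y i + c3)) /
            Matrix.det !![a1, a2, a3; b1, b2, b3; c1, c2, c3] ^ (n / 3)) *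
        ((∏ i ∈ Finset.Icc 5 n, Delta3 x y p q 1 2 i) *
          (Delta3 x y p q 1 3 4 * Delta3 x y p q 2 3 4) ^ (n / 3 - 1) /
          (Delta3 x y p q 1 2 3 * Delta3 x y p q 1 2 4) ^ (2 * n / 3 - 3)) := by
  set A := !![a1, a2, a3; b1, b2, b3; c1, c2, c3]
  have hline : ∀ i ∈ Icc 1 n, gradLine (xt i) (yt i) (pt i) (qt i) =
      (c1 * x i + c2 * y i + c3) • gradLine (x i) (y i) (p i) (q i) ᵥ* A⁻¹ := by
    intro i hi
    rw [hpt i hi, hqt i hi]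
    refine gradLine_transform (isUnit_iff_ne_zero.2 hD) ?_
    have hAP : A *ᵥ ![x i, y i, 1] =
        ![a1 * x i + a2 * y i + a3, b1 * x i + b2 * y i + b3, c1 * x i + c2 * y i + c3] := by
      ext j; fin_cases j <;> simp [A, mulVec, add_assoc]
    rw [hAP, smul_vec3, hxt i hi, hyt i hi, smul_eq_mul, smul_eq_mul, smul_eq_mul,
      inv_mul_cancel₀ (hh i hi), div_eq_inv_mul, div_eq_inv_mul]
  exact zn_eq_of_forall_eq_mul hn hg hD hh h123 h124 fun i hi j hj k hk =>
    Delta3_transform hline hi hj hk
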